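/- arXiv:1808.06274 — 4 statements merged into one kernel-verified Lean document; each statement's English description precedes it below -/
import Mathlib

section
/- Let (M, d) be a complete metric space, let W ⊆ M be a nonempty set, and let (y_k) be a sequence in M that is quasi-Fejér convergent to W. Then the sequence (y_k) is bounded (i.e., it is contained in some closed ball of M). -/
/-- A sequence quasi-Fejér convergent to a nonempty set in a complete metric space
is bounded, i.e. contained in some closed ball. -/
theorem quasiFejer_bounded {M : Type*} [MetricSpace M] [CompleteSpace M]
    (W : Set M) (hW : W.Nonempty) (y : ℕ → M)
    (hqf : ∀ w ∈ W, ∃ ε : ℕ → ℝ, (∀ k, 0 ≤ ε k) ∧ Summable ε ∧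
      ∀ k, dist (y (k + 1)) w ^ 2 ≤ dist (y k) w ^ 2 + ε k) :
    ∃ (c : M) (r : ℝ), ∀ k, y k ∈ Metric.closedBall c r := by
  obtain ⟨w, hw⟩ := hW
  obtain ⟨ε, hε0, hεs, hrec⟩ := hqf w hw
  set T := ∑' k, ε k with hT
  have hpart : ∀ k, dist (y k) w ^ 2 ≤ dist (y 0) w ^ 2 + ∑ i ∈ Finset.range k, ε i := by
    intro k
    induction k with
    | zero => simp
    | succ n ih =>
        calc dist (y (n + 1)) w ^ 2 ≤ dist (y n) w ^ 2 + ε n := hrec n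
        _ ≤ dist (y 0) w ^ 2 + ∑ i ∈ Finset.range n, ε i + ε n := by linarith
        _ = dist (y 0) w ^ 2 + ∑ i ∈ Finset.range (n + 1), ε i := by
            rw [Finset.sum_range_succ]; ring
  have hbound : ∀ k, dist (y k) w ^ 2 ≤ dist (y 0) w ^ 2 + T := by
    intro k
    refine (hpart k).trans ?_
    have := Summable.sum_le_tsum (Finset.range k) (fun i _ => hε0 i) hεs
    linarith
  refine ⟨w, Real.sqrt (dist (y 0) w ^ 2 + T), fun k => ?_⟩
  rw [Metric.mem_closedBall]
  have h1 : dist (y k) w ^ 2 ≤ dist (y 0) w ^ 2 + T := hbound k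
  have := Real.sqrt_le_sqrt h1
  rwa [Real.sqrt_sq dist_nonneg] at this
end

section
/- Let (M, d) be a complete metric space, let W ⊆ M be a nonempty set, and let (y_k) be a sequence in M that is quasi-Fejér convergent to W. If some cluster point y of (y_k) (i.e., a limit of some subsequence of (y_k)) belongs to W, then the whole sequence (y_k) converges to y. -/
/-! The squared distances `a k = d(y k, p)²` satisfy `a (k+1) ≤ a k + ε k`, so `a k - ∑_{i<k} ε i`
is antitone and bounded below: `a` converges. Along the subsequence it tends to `0`, so `d(y k, p) → 0`. -/

open Filter Topology Finset

theorem antitone_sub_sum_range_of_le_add {a ε : ℕ → ℝ} (h : ∀ k, a (k + 1) ≤ a k + ε k) :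
    Antitone fun n => a n - ∑ k ∈ range n, ε k :=
  antitone_nat_of_succ_le fun n => by
    rw [sum_range_succ]
    linarith [h n]

theorem exists_tendsto_of_le_add_of_summable {a ε : ℕ → ℝ} (ha : BddBelow (Set.range a))
    (hε : Summable ε) (h : ∀ k, a (k + 1) ≤ a k + ε k) : ∃ L, Tendsto a atTop (𝓝 L) := by
  have hs : Tendsto (fun n => ∑ k ∈ range n, ε k) atTop (𝓝 (∑' k, ε k)) :=
    hε.hasSum.tendsto_sum_nat
  obtain ⟨m, hm⟩ := ha
  obtain ⟨C, hC⟩ := hs.bddAbove_range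
  have hbdd : BddBelow (Set.range fun n => a n - ∑ k ∈ range n, ε k) := by
    refine ⟨m - C, ?_⟩
    rintro _ ⟨n, rfl⟩
    linarith [hm ⟨n, rfl⟩, hC ⟨n, rfl⟩]
  exact ⟨_, by simpa using (tendsto_atTop_ciInf (antitone_sub_sum_range_of_le_add h) hbdd).add hs⟩

theorem tendsto_of_tendsto_dist_of_tendsto_comp {M : Type*} [PseudoMetricSpace M] {y : ℕ → M}
    {p : M} {r : ℝ} {φ : ℕ → ℕ} (hr : Tendsto (fun k => dist (y k) p) atTop (𝓝 r))
    (hφ : Tendsto φ atTop atTop) (hsub : Tendsto (y ∘ φ) atTop (𝓝 p)) :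
    Tendsto y atTop (𝓝 p) := by
  have hr0 : r = 0 := tendsto_nhds_unique (hr.comp hφ) (tendsto_iff_dist_tendsto_zero.1 hsub)
  rw [tendsto_iff_dist_tendsto_zero]
  rwa [hr0] at hr

theorem quasiFejer_converges_of_clusterPoint_general {M : Type*} [MetricSpace M]
    (W : Set M) (y : ℕ → M)
    (hqf : ∀ w ∈ W, ∃ ε : ℕ → ℝ, (∀ k, 0 ≤ ε k) ∧ Summable ε ∧
      ∀ k, dist (y (k + 1)) w ^ 2 ≤ dist (y k) w ^ 2 + ε k)
    (p : M) (hpW : p ∈ W)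
    (φ : ℕ → ℕ) (hφ : StrictMono φ)
    (hsub : Filter.Tendsto (y ∘ φ) Filter.atTop (nhds p)) :
    Filter.Tendsto y Filter.atTop (nhds p) := by
  obtain ⟨ε, -, hεs, hstep⟩ := hqf p hpW
  obtain ⟨L, hL⟩ := exists_tendsto_of_le_add_of_summable
    (a := fun k => dist (y k) p ^ 2) ⟨0, by rintro _ ⟨k, rfl⟩; exact sq_nonneg _⟩ hεs hstep
  have hdist : Tendsto (fun k => dist (y k) p) atTop (𝓝 √L) := by
    simpa [Real.sqrt_sq dist_nonneg] using hL.sqrt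
  exact tendsto_of_tendsto_dist_of_tendsto_comp hdist hφ.tendsto_atTop hsub

/-- If a quasi-Fejér convergent sequence (to a nonempty set `W`, in a complete metric
space) has a cluster point belonging to `W`, then the whole sequence converges to it. -/
theorem quasiFejer_converges_of_clusterPoint {M : Type*} [MetricSpace M] [CompleteSpace M]
    (W : Set M) (hW : W.Nonempty) (y : ℕ → M)
    (hqf : ∀ w ∈ W, ∃ ε : ℕ → ℝ, (∀ k, 0 ≤ ε k) ∧ Summable ε ∧
      ∀ k, dist (y (k + 1)) w ^ 2 ≤ dist (y k) w ^ 2 + ε k)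
    (p : M) (hpW : p ∈ W)
    (φ : ℕ → ℕ) (hφ : StrictMono φ)
    (hsub : Filter.Tendsto (y ∘ φ) Filter.atTop (nhds p)) :
    Filter.Tendsto y Filter.atTop (nhds p) :=
  quasiFejer_converges_of_clusterPoint_general W y hqf p hpW φ hφ hsub
end

section
/- Let κ < 0 and σ > 0, let (t_k)_{k≥0} be a sequence of positive real numbers with Σ_{k=0}^∞ t_k² = σ, and let (u_k)_{k≥0} be a sequence of nonnegative real numbers satisfying cosh(√|κ| · u_{k+1}) ≤ cosh(√|κ| · u_k) · (1 + (√|κ| · t_k / 2) · sinh(√|κ| · t_k)) for all k ≥ 0. Then for every k ≥ 0 one has cosh(√|κ| · u_k) ≤ cosh(√|κ| · u_0) · exp((1/2) · √(σ|κ|) · sinh(√(σ|κ|))). -/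
open Real

lemma sinh_convexOn : ConvexOn ℝ (Set.Ici (0:ℝ)) sinh := by
  apply convexOn_of_deriv2_nonneg (convex_Ici 0)
    Real.continuous_sinh.continuousOn
    Real.differentiable_sinh.differentiableOn
  · simp only [Real.deriv_sinh]
    exact Real.differentiable_cosh.differentiableOn
  · intro x hx
    simp only [Function.iterate_succ, Function.iterate_zero, Function.comp_apply, id_eq,
      Real.deriv_sinh, Real.deriv_cosh]
    rw [interior_Ici] at hx
    exact Real.sinh_nonneg_iff.2 hx.le

/-- `sinh s / s` is increasing: for `0 ≤ s ≤ S`, `sinh s ≤ (s/S) * sinh S`. -/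
lemma sinh_le_mul (s S : ℝ) (hs : 0 ≤ s) (hsS : s ≤ S) (hS : 0 < S) :
    sinh s ≤ s / S * sinh S := by
  have key := sinh_convexOn.2 (Set.self_mem_Ici) (Set.mem_Ici.2 (hs.trans hsS))
    (show (0:ℝ) ≤ 1 - s / S by
      have : s / S ≤ 1 := (div_le_one hS).2 hsS; linarith)
    (div_nonneg hs hS.le) (by ring)
  simpa [Real.sinh_zero, smul_eq_mul, mul_div_cancel₀ _ hS.ne', div_mul_eq_mul_div,
    mul_comm] using key

/-- Abstract recurrence estimate underlying Lemma 3.1: boundedness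
of `cosh (√|κ| u k)` along the subgradient iterates. -/
theorem cosh_recurrence_bound (κ σ : ℝ) (hκ : κ < 0) (hσ : 0 < σ)
    (t : ℕ → ℝ) (ht : ∀ k, 0 < t k) (htσ : HasSum (fun k => t k ^ 2) σ)
    (u : ℕ → ℝ) (hu : ∀ k, 0 ≤ u k)
    (hrec : ∀ k, cosh (Real.sqrt |κ| * u (k + 1)) ≤
      cosh (Real.sqrt |κ| * u k) *
        (1 + Real.sqrt |κ| * t k / 2 * sinh (Real.sqrt |κ| * t k))) :
    ∀ k, cosh (Real.sqrt |κ| * u k) ≤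
      cosh (Real.sqrt |κ| * u 0) *
        Real.exp (1 / 2 * Real.sqrt (σ * |κ|) * sinh (Real.sqrt (σ * |κ|))) := by
  set a : ℝ := Real.sqrt |κ| with ha
  have hκ0 : 0 < |κ| := abs_pos.2 hκ.ne
  have ha0 : 0 < a := Real.sqrt_pos.2 hκ0
  set S : ℝ := Real.sqrt (σ * |κ|) with hSdef
  have hS0 : 0 < S := Real.sqrt_pos.2 (mul_pos hσ hκ0)
  have hSa : S = Real.sqrt σ * a := by
    rw [hSdef, ha, Real.sqrt_mul hσ.le]
  -- partial sums of (a * t j) ^ 2 are ≤ S ^ 2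
  have hsum2 : ∀ k, ∑ j ∈ Finset.range k, (a * t j) ^ 2 ≤ S ^ 2 := by
    intro k
    have h1 : ∑ j ∈ Finset.range k, t j ^ 2 ≤ σ :=
      sum_le_hasSum _ (fun i _ => sq_nonneg _) htσ
    have hS2 : S ^ 2 = σ * |κ| := Real.sq_sqrt (mul_pos hσ hκ0).le
    have ha2 : a ^ 2 = |κ| := Real.sq_sqrt hκ0.le
    calc ∑ j ∈ Finset.range k, (a * t j) ^ 2
        = a ^ 2 * ∑ j ∈ Finset.range k, t j ^ 2 := by
          rw [Finset.mul_sum]; congr 1; ext j; ring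
      _ ≤ a ^ 2 * σ := by nlinarith [sq_nonneg a]
      _ = S ^ 2 := by rw [hS2, ha2]; ring
  -- each a * t j ≤ S
  have htle : ∀ j, a * t j ≤ S := by
    intro j
    have h1 : t j ^ 2 ≤ σ := le_hasSum htσ j (fun i _ => sq_nonneg _)
    have h2 : t j ≤ Real.sqrt σ := by
      nlinarith [Real.sq_sqrt hσ.le, Real.sqrt_nonneg σ, (ht j).le]
    rw [hSa, mul_comm]
    exact mul_le_mul_of_nonneg_right h2 ha0.le
  -- sum bound: ∑ (a t j) sinh (a t j) ≤ S sinh S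
  have hsumbound : ∀ k, ∑ j ∈ Finset.range k, a * t j * sinh (a * t j) ≤ S * sinh S := by
    intro k
    have hterm : ∀ j, a * t j * sinh (a * t j) ≤ (a * t j) ^ 2 / S * sinh S := by
      intro j
      have hst : 0 ≤ a * t j := mul_nonneg ha0.le (ht j).le
      have := sinh_le_mul (a * t j) S hst (htle j) hS0
      calc a * t j * sinh (a * t j) ≤ a * t j * (a * t j / S * sinh S) :=
            mul_le_mul_of_nonneg_left this hst
        _ = (a * t j) ^ 2 / S * sinh S := by ring
    calc ∑ j ∈ Finset.range k, a * t j * sinh (a * t j)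
        ≤ ∑ j ∈ Finset.range k, (a * t j) ^ 2 / S * sinh S :=
          Finset.sum_le_sum (fun j _ => hterm j)
      _ = (∑ j ∈ Finset.range k, (a * t j) ^ 2) / S * sinh S := by
          rw [Finset.sum_div, Finset.sum_mul]
      _ ≤ S ^ 2 / S * sinh S := by
          have hsinh : 0 ≤ sinh S := Real.sinh_nonneg_iff.2 hS0.le
          gcongr
          exact hsum2 k
      _ = S * sinh S := by field_simp
  -- induction: cosh (a u k) ≤ cosh (a u 0) * exp (½ ∑_{j<k} (a t j) sinh (a t j))
  have hmain : ∀ k, cosh (a * u k) ≤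
      cosh (a * u 0) * Real.exp (1 / 2 * ∑ j ∈ Finset.range k, a * t j * sinh (a * t j)) := by
    intro k
    induction k with
    | zero => simp
    | succ k ih =>
      have hcpos : (0:ℝ) < cosh (a * u k) := Real.cosh_pos _
      have hfac : 1 + a * t k / 2 * sinh (a * t k) ≤
          Real.exp (a * t k * sinh (a * t k) / 2) := by
        have := Real.add_one_le_exp (a * t k * sinh (a * t k) / 2)
        linarith
      have hfacpos : 0 ≤ 1 + a * t k / 2 * sinh (a * t k) := by
        have : 0 ≤ a * t k / 2 * sinh (a * t k) :=
          mul_nonneg (div_nonneg (mul_nonneg ha0.le (ht k).le) (by norm_num))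
            (Real.sinh_nonneg_iff.2 (mul_nonneg ha0.le (ht k).le))
        linarith
      calc cosh (a * u (k + 1)) ≤ cosh (a * u k) * (1 + a * t k / 2 * sinh (a * t k)) :=
            hrec k
        _ ≤ (cosh (a * u 0) * Real.exp (1 / 2 * ∑ j ∈ Finset.range k, a * t j * sinh (a * t j)))
              * Real.exp (a * t k * sinh (a * t k) / 2) := by
            apply mul_le_mul ih hfac hfacpos
            exact mul_nonneg (Real.cosh_pos _).le (Real.exp_pos _).le
        _ = cosh (a * u 0) *
              Real.exp (1 / 2 * ∑ j ∈ Finset.range (k + 1), a * t j * sinh (a * t j)) := by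
            rw [mul_assoc, ← Real.exp_add, Finset.sum_range_succ]
            congr 2
            ring
  intro k
  calc cosh (a * u k) ≤ cosh (a * u 0) *
        Real.exp (1 / 2 * ∑ j ∈ Finset.range k, a * t j * sinh (a * t j)) := hmain k
    _ ≤ cosh (a * u 0) * Real.exp (1 / 2 * S * sinh S) := by
        apply mul_le_mul_of_nonneg_left _ (Real.cosh_pos _).le
        apply Real.exp_le_exp.2
        have := hsumbound k
        linarith
end

section
/- Let τ > 0, C > 0 and F* ∈ ℝ. Let (t_k)_{k≥0} be positive reals, let (s_k)_{k≥0} be reals with 0 < s_k ≤ τ for all k, let (F_k)_{k≥0} be reals with F_k ≥ F* for all k, and let (d_k)_{k≥0} be nonnegative reals satisfying d_{k+1}² ≤ d_k² + C·t_k² + (2·t_k/s_k)·(F* − F_k) for all k ≥ 0. Then for every natural number N, min{F_k − F* : k = 0, 1, …, N} ≤ τ · (d_0² + C · Σ_{k=0}^N t_k²) / (2 · Σ_{k=0}^N t_k). -/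
/-- Abstract sequence form of Theorem 3.3 (iteration-complexity of the subgradient
method with exogenous step-size). -/
theorem subgradient_exogenous_complexity (τ C Fstar : ℝ) (hτ : 0 < τ) (hC : 0 < C)
    (t : ℕ → ℝ) (ht : ∀ k, 0 < t k)
    (s : ℕ → ℝ) (hs : ∀ k, 0 < s k ∧ s k ≤ τ)
    (F : ℕ → ℝ) (hF : ∀ k, Fstar ≤ F k)
    (d : ℕ → ℝ) (hd : ∀ k, 0 ≤ d k)
    (hrec : ∀ k, d (k + 1) ^ 2 ≤ d k ^ 2 + C * t k ^ 2 + 2 * t k / s k * (Fstar - F k)) :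
    ∀ N : ℕ,
      (Finset.range (N + 1)).inf' (Finset.nonempty_range_iff.mpr (Nat.succ_ne_zero N))
          (fun k => F k - Fstar) ≤
        τ * (d 0 ^ 2 + C * ∑ k ∈ Finset.range (N + 1), t k ^ 2) /
          (2 * ∑ k ∈ Finset.range (N + 1), t k) := by
  intro N
  set ne : (Finset.range (N + 1)).Nonempty :=
    Finset.nonempty_range_iff.mpr (Nat.succ_ne_zero N) with hne
  set m := (Finset.range (N + 1)).inf' ne (fun k => F k - Fstar) with hm
  have hm0 : 0 ≤ m := by
    apply Finset.le_inf'
    intro k _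
    linarith [hF k]
  have hT : 0 < ∑ k ∈ Finset.range (N + 1), t k :=
    Finset.sum_pos (fun k _ => ht k) ne
  -- Key per-step bound: 2 * t k / τ * m ≤ d k ^2 - d (k+1)^2 + C * t k ^2 for k ≤ N
  have key : ∀ k ∈ Finset.range (N + 1),
      2 * t k / τ * m ≤ d k ^ 2 - d (k + 1) ^ 2 + C * t k ^ 2 := by
    intro k hk
    have hmk : m ≤ F k - Fstar := Finset.inf'_le _ hk
    have hsk := hs k
    have h1 : 2 * t k / τ * m ≤ 2 * t k / s k * (F k - Fstar) := by
      apply mul_le_mul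
      · apply div_le_div_of_nonneg_left (by linarith [ht k]) hsk.1 hsk.2
      · exact hmk
      · exact hm0
      · have h1 := ht k; have h2 := hsk.1; positivity
    have := hrec k
    nlinarith
  -- Sum up
  have hsum := Finset.sum_le_sum key
  rw [Finset.sum_add_distrib, Finset.sum_range_sub' (fun k => d k ^ 2)] at hsum
  have hd2 : 0 ≤ d (N + 1) ^ 2 := sq_nonneg _
  have hsum' : (2 / τ * m) * (∑ k ∈ Finset.range (N + 1), t k)
      ≤ d 0 ^ 2 + C * ∑ k ∈ Finset.range (N + 1), t k ^ 2 := by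
    rw [Finset.mul_sum]
    calc ∑ k ∈ Finset.range (N + 1), 2 / τ * m * t k
        = ∑ k ∈ Finset.range (N + 1), 2 * t k / τ * m := by
          apply Finset.sum_congr rfl; intro k _; ring
      _ ≤ d 0 ^ 2 - d (N + 1) ^ 2 + ∑ k ∈ Finset.range (N + 1), C * t k ^ 2 := hsum
      _ ≤ d 0 ^ 2 + C * ∑ k ∈ Finset.range (N + 1), t k ^ 2 := by
          rw [Finset.mul_sum]; linarith
  rw [le_div_iff₀ (by positivity)]
  calc m * (2 * ∑ k ∈ Finset.range (N + 1), t k)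
      = τ * ((2 / τ * m) * (∑ k ∈ Finset.range (N + 1), t k)) := by
        field_simp
    _ ≤ τ * (d 0 ^ 2 + C * ∑ k ∈ Finset.range (N + 1), t k ^ 2) := by
        apply mul_le_mul_of_nonneg_left hsum' hτ.le
end
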